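/- (Pointwise Picone inequality.) For every p ∈ (1,+∞), every N ≥ 1, all vectors a, b ∈ ℝ^N, and all real numbers s ≥ 0 and t > 0, one has p·(s/t)^{p−1}·⟨φ_p(b), a⟩ − (p−1)·(s/t)^p·|b|^p ≤ |a|^p, where ⟨·,·⟩ is the Euclidean inner product and |·| the Euclidean norm. -/

import Mathlib

/-!
Cauchy–Schwarz bounds `⟨φ_p(b), a⟩` by `|b|^{p-1} |a|`, which reduces the claim to the scalar
Young inequality `p x^{p-1} y ≤ (p-1) x^p + y^p` with `x = (s/t) |b|` and `y = |a|`.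
-/

open Real

lemma Real.mul_rpow_sub_one_mul_le_add {p x y : ℝ} (hp : 1 < p) (hx : 0 ≤ x) (hy : 0 ≤ y) :
    p * x ^ (p - 1) * y ≤ (p - 1) * x ^ p + y ^ p := by
  have hp0 : 0 < p := by linarith
  have hp1 : p - 1 ≠ 0 := by linarith
  have hpq : p.HolderConjugate (p / (p - 1)) := .conjExponent hp
  have young := young_inequality_of_nonneg hy (rpow_nonneg hx (p - 1)) hpq
  have hxp : (x ^ (p - 1)) ^ (p / (p - 1)) = x ^ p := by
    rw [← rpow_mul hx, mul_div_cancel₀ p hp1]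
  rw [hxp] at young
  calc p * x ^ (p - 1) * y = p * (y * x ^ (p - 1)) := by ring
    _ ≤ p * (y ^ p / p + x ^ p / (p / (p - 1))) := by gcongr
    _ = (p - 1) * x ^ p + y ^ p := by field_simp; ring

lemma real_inner_rpow_norm_smul_le {E : Type*} [NormedAddCommGroup E] [InnerProductSpace ℝ E]
    (p : ℝ) (a b : E) : inner ℝ (‖b‖ ^ (p - 2) • b) a ≤ ‖b‖ ^ (p - 1) * ‖a‖ := by
  rw [real_inner_smul_left]
  rcases eq_or_ne b 0 with rfl | hb
  · simp only [inner_zero_left, mul_zero]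
    exact mul_nonneg (rpow_nonneg (norm_nonneg _) _) (norm_nonneg a)
  calc ‖b‖ ^ (p - 2) * inner ℝ b a ≤ ‖b‖ ^ (p - 2) * (‖b‖ * ‖a‖) := by
        gcongr
        exact real_inner_le_norm b a
    _ = ‖b‖ ^ (p - 1) * ‖a‖ := by
        rw [← mul_assoc, ← rpow_add_one (norm_ne_zero_iff.mpr hb)]
        ring_nf

theorem picone_inner_le {E : Type*} [NormedAddCommGroup E] [InnerProductSpace ℝ E]
    {p c : ℝ} (hp : 1 < p) (hc : 0 ≤ c) (a b : E) :
    p * c ^ (p - 1) * inner ℝ (‖b‖ ^ (p - 2) • b) a - (p - 1) * c ^ p * ‖b‖ ^ p ≤ ‖a‖ ^ p := by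
  have hb := norm_nonneg b
  calc p * c ^ (p - 1) * inner ℝ (‖b‖ ^ (p - 2) • b) a - (p - 1) * c ^ p * ‖b‖ ^ p
      ≤ p * c ^ (p - 1) * (‖b‖ ^ (p - 1) * ‖a‖) - (p - 1) * c ^ p * ‖b‖ ^ p := by
        have : 0 ≤ p := by linarith
        gcongr
        exact real_inner_rpow_norm_smul_le p a b
    _ = p * (c * ‖b‖) ^ (p - 1) * ‖a‖ - (p - 1) * (c * ‖b‖) ^ p := by
        rw [mul_rpow hc hb, mul_rpow hc hb]; ring
    _ ≤ ‖a‖ ^ p := by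
        linarith [Real.mul_rpow_sub_one_mul_le_add hp (mul_nonneg hc hb) (norm_nonneg a)]

theorem pointwise_picone_general (p : ℝ) (hp : 1 < p) (N : ℕ)
    (a b : EuclideanSpace ℝ (Fin N)) (s t : ℝ) (hs : 0 ≤ s) (ht : 0 < t) :
    p * (s / t) ^ (p - 1) * (inner ℝ (‖b‖ ^ (p - 2) • b) a : ℝ)
      - (p - 1) * (s / t) ^ p * ‖b‖ ^ p ≤ ‖a‖ ^ p :=
  picone_inner_le hp (div_nonneg hs ht.le) a b

/-- **Pointwise Picone inequality.** For `p ∈ (1,∞)`, all `a, b ∈ ℝ^N`, `s ≥ 0`, `t > 0`: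
`p (s/t)^{p-1} ⟨φ_p(b), a⟩ - (p-1) (s/t)^p |b|^p ≤ |a|^p`, where `φ_p(b) = |b|^{p-2} b`. -/
theorem pointwise_picone (p : ℝ) (hp : 1 < p) (N : ℕ) (hN : 1 ≤ N)
    (a b : EuclideanSpace ℝ (Fin N)) (s t : ℝ) (hs : 0 ≤ s) (ht : 0 < t) :
    p * (s / t) ^ (p - 1) * (inner ℝ (‖b‖ ^ (p - 2) • b) a : ℝ)
      - (p - 1) * (s / t) ^ p * ‖b‖ ^ p ≤ ‖a‖ ^ p :=
  pointwise_picone_general p hp N a b s t hs ht
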